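/- For every real s with 2 < s < 3 there exists N such that for all n ≥ N there exists a Boolean function f : F_2^n → F_2 of algebraic degree 3 with sparsity ‖f‖ ≤ n^s such that every 0-restriction of f on at least 3·√(ln n)·n^{(3−s)/2} variables still has algebraic degree 3. -/

import Mathlib

/-!
Split the variables into consecutive blocks of `b ≈ n^((s-1)/2)` indices and let `f` be the sum
of all cubic monomials lying inside one block; it has at most `n·b² ≤ n^s` monomials. By
uniqueness of the ANF, a `0`-restriction keeping the variables `K` keeps exactly the monomials
of `f` inside `K`. There are only about `n/b ≈ n^((3-s)/2)` blocks, so by pigeonhole any `K` with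
more than twice that many variables contains three variables of one block, hence a cubic
monomial; the factor `3·√(ln n)` is slack.
-/

open Finset

/-- Evaluation of the multilinear polynomial over `F₂` whose set of monomials is `M`. -/
def anfEval {n : ℕ} (M : Finset (Finset (Fin n))) (x : Fin n → ZMod 2) : ZMod 2 :=
  ∑ S ∈ M, ∏ j ∈ S, x j

/-- `M` is the algebraic normal form (set of monomials) of the Boolean function `f`. -/
def IsANF {n : ℕ} (f : (Fin n → ZMod 2) → ZMod 2) (M : Finset (Finset (Fin n))) : Prop :=
  ∀ x, f x = anfEval M x

/-- The number of crucial terms (monomials of degree at least 3) of an ANF. -/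
def crucialCount {n : ℕ} (M : Finset (Finset (Fin n))) : ℕ :=
  (M.filter fun S => 3 ≤ S.card).card

/-- The `0`-restriction of `f` keeping exactly the variables in `K` (all other
variables are set to the constant `0`). It is a Boolean function on `K.card` variables. -/
def zeroRestrict {n : ℕ} (f : (Fin n → ZMod 2) → ZMod 2) (K : Finset (Fin n)) :
    (Fin n → ZMod 2) → ZMod 2 :=
  fun x => f fun i => if i ∈ K then x i else 0

open scoped symmDiff

lemma sum_symmDiff_of_charTwo {ι R : Type*} [DecidableEq ι] [CommRing R] [CharP R 2]
    (s t : Finset ι) (f : ι → R) : ∑ i ∈ s ∆ t, f i = ∑ i ∈ s, f i + ∑ i ∈ t, f i := by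
  rw [Finset.symmDiff_def, sum_union disjoint_sdiff_sdiff, ← sum_inter_add_sum_sdiff s t,
    ← sum_inter_add_sum_sdiff t s, inter_comm t s]
  linear_combination (-∑ i ∈ s ∩ t, f i) * CharTwo.two_eq_zero (R := R)

section AlgebraicNormalForm

variable {n : ℕ}

lemma anfEval_indicator (M : Finset (Finset (Fin n))) (S : Finset (Fin n)) :
    anfEval M (fun j => if j ∈ S then 1 else 0) = #{T ∈ M | T ⊆ S} := by
  simp_rw [anfEval, prod_boole, ← subset_iff, sum_boole]

lemma eq_empty_of_anfEval_eq_zero {M : Finset (Finset (Fin n))}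
    (h : ∀ x, anfEval M x = 0) : M = ∅ := by
  by_contra hM
  obtain ⟨S, hS, hmin⟩ := exists_min_image M card (nonempty_iff_ne_empty.2 hM)
  have hsub : {T ∈ M | T ⊆ S} = {S} := by
    ext T
    simp only [mem_filter, mem_singleton]
    exact ⟨fun ⟨hT, hTS⟩ => eq_of_subset_of_card_le hTS (hmin T hT),
      by rintro rfl; exact ⟨hS, subset_rfl⟩⟩
  simpa [anfEval_indicator, hsub] using h fun j => if j ∈ S then 1 else 0

lemma anfEval_injective : Function.Injective (anfEval (n := n)) := by
  intro M M' h
  rw [← symmDiff_eq_empty]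
  refine eq_empty_of_anfEval_eq_zero fun x => ?_
  rw [anfEval, sum_symmDiff_of_charTwo, ← anfEval, ← anfEval, congrFun h x,
    CharTwo.add_self_eq_zero]

lemma isANF_zeroRestrict_anfEval (M : Finset (Finset (Fin n))) (K : Finset (Fin n)) :
    IsANF (zeroRestrict (anfEval M) K) {S ∈ M | S ⊆ K} := by
  intro x
  simp only [zeroRestrict, anfEval, sum_filter]
  refine sum_congr rfl fun S _ => ?_
  split_ifs with hSK
  · exact prod_congr rfl fun j hj => if_pos (hSK hj)
  · obtain ⟨j, hj, hjK⟩ := not_subset.1 hSK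
    exact prod_eq_zero hj (if_neg hjK)

lemma IsANF.unique {f : (Fin n → ZMod 2) → ZMod 2} {M M' : Finset (Finset (Fin n))}
    (hM : IsANF f M) (hM' : IsANF f M') : M = M' :=
  anfEval_injective <| funext fun x => (hM x).symm.trans (hM' x)

lemma degree_zeroRestrict_anfEval {d : ℕ} {M M' : Finset (Finset (Fin n))}
    {K : Finset (Fin n)} (hM : ∀ S ∈ M, #S ≤ d) (hK : ∃ S ∈ M, S ⊆ K ∧ #S = d)
    (hM' : IsANF (zeroRestrict (anfEval M) K) M') :
    (∀ S ∈ M', #S ≤ d) ∧ ∃ S ∈ M', #S = d := by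
  obtain rfl := (isANF_zeroRestrict_anfEval M K).unique hM'
  obtain ⟨S, hS, hSK, hSd⟩ := hK
  exact ⟨fun T hT => hM T (mem_filter.1 hT).1, S, mem_filter.2 ⟨hS, hSK⟩, hSd⟩

end AlgebraicNormalForm

section FiberSubsets

variable {α β : Type*} [Fintype α] [DecidableEq α] [DecidableEq β]

def fiberSubsets (g : α → β) (k : ℕ) : Finset (Finset α) :=
  {S | #S = k ∧ ∀ i ∈ S, ∀ j ∈ S, g i = g j}

@[simp]
lemma mem_fiberSubsets {g : α → β} {k : ℕ} {S : Finset α} :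
    S ∈ fiberSubsets g k ↔ #S = k ∧ ∀ i ∈ S, ∀ j ∈ S, g i = g j := by
  simp [fiberSubsets]

lemma choose_le_mul_pow_pred {c b k : ℕ} (hcb : c ≤ b) (hk : 1 ≤ k) :
    c.choose k ≤ c * b ^ (k - 1) :=
  calc c.choose k ≤ c ^ k := Nat.choose_le_pow c k
    _ = c * c ^ (k - 1) := by rw [← pow_succ', Nat.sub_add_cancel hk]
    _ ≤ c * b ^ (k - 1) := by gcongr

lemma card_fiberSubsets_le {g : α → β} {k b : ℕ} (hk : 1 ≤ k)
    (hb : ∀ q, #{i | g i = q} ≤ b) :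
    #(fiberSubsets g k) ≤ Fintype.card α * b ^ (k - 1) := by
  have hsub :
      fiberSubsets g k ⊆ (univ.image g).biUnion fun q => powersetCard k {i | g i = q} := by
    intro S hS
    obtain ⟨hcard, hfib⟩ := mem_fiberSubsets.1 hS
    obtain ⟨a, ha⟩ : S.Nonempty := card_pos.1 (by omega)
    simp only [mem_biUnion, mem_image, mem_powersetCard]
    exact ⟨g a, ⟨a, mem_univ a, rfl⟩, fun i hi => by simp [hfib i hi a ha], hcard⟩
  calc #(fiberSubsets g k)
      ≤ ∑ q ∈ univ.image g, (#{i | g i = q}).choose k :=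
        (card_le_card hsub).trans (card_biUnion_le.trans_eq (by simp only [card_powersetCard]))
    _ ≤ ∑ q ∈ univ.image g, #{i | g i = q} * b ^ (k - 1) :=
        sum_le_sum fun q _ => choose_le_mul_pow_pred (hb q) hk
    _ = Fintype.card α * b ^ (k - 1) := by rw [← sum_mul, ← card_eq_sum_card_image, card_univ]

lemma exists_mem_fiberSubsets_subset {g : α → β} {k : ℕ} {K : Finset α} {t : Finset β}
    (hg : ∀ a ∈ K, g a ∈ t) (hK : #t * (k - 1) < #K) :
    ∃ S ∈ fiberSubsets g k, S ⊆ K := by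
  obtain ⟨q, -, hq⟩ := exists_lt_card_fiber_of_mul_lt_card_of_maps_to hg hK
  obtain ⟨S, hSK, hcard⟩ := exists_subset_card_eq (show k ≤ #{a ∈ K | g a = q} by omega)
  refine ⟨S, mem_fiberSubsets.2 ⟨hcard, fun i hi j hj => ?_⟩, hSK.trans (filter_subset _ _)⟩
  rw [(mem_filter.1 (hSK hi)).2, (mem_filter.1 (hSK hj)).2]

end FiberSubsets

section Blocks

variable {n b : ℕ}

lemma card_filter_div_eq_le (hb : 0 < b) (q : ℕ) : #{i : Fin n | (i : ℕ) / b = q} ≤ b := by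
  have hinj :
      Set.InjOn (fun i : Fin n => (i : ℕ) % b) ({i | (i : ℕ) / b = q} : Finset (Fin n)) := by
    intro i hi j hj hij
    have hi : (i : ℕ) / b = q := by simpa using hi
    have hj : (j : ℕ) / b = q := by simpa using hj
    exact Fin.ext <| by
      rw [← Nat.div_add_mod i b, ← Nat.div_add_mod j b, hi, hj]; exact congrArg _ hij
  simpa using card_le_card_of_injOn (t := range b) _
    (fun i _ => mem_range.2 (Nat.mod_lt _ hb)) hinj

lemma div_mem_range (b : ℕ) (i : Fin n) : (i : ℕ) / b ∈ range (n / b + 1) :=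
  mem_range.2 (Nat.lt_succ_of_le (Nat.div_le_div_right i.isLt.le))

lemma card_blockSubsets_le (hb : 0 < b) (k : ℕ) (hk : 1 ≤ k) :
    #(fiberSubsets (fun i : Fin n => (i : ℕ) / b) k) ≤ n * b ^ (k - 1) := by
  simpa using card_fiberSubsets_le hk (card_filter_div_eq_le (n := n) hb)

lemma exists_blockSubset_subset {k : ℕ} {K : Finset (Fin n)}
    (hK : (n / b + 1) * (k - 1) < #K) :
    ∃ S ∈ fiberSubsets (fun i : Fin n => (i : ℕ) / b) k, S ⊆ K :=
  exists_mem_fiberSubsets_subset (fun i _ => div_mem_range b i) (by rwa [card_range])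

end Blocks

section BlockSize

open Real Filter

noncomputable def blockSize (s : ℝ) (n : ℕ) : ℕ := ⌊(n : ℝ) ^ ((s - 1) / 2)⌋₊

variable {s : ℝ} {n : ℕ}

lemma blockSize_le_rpow (s : ℝ) (n : ℕ) : (blockSize s n : ℝ) ≤ (n : ℝ) ^ ((s - 1) / 2) :=
  Nat.floor_le (by positivity)

lemma natCast_mul_blockSize_sq_le (s : ℝ) (n : ℕ) :
    (n : ℝ) * blockSize s n ^ 2 ≤ (n : ℝ) ^ s := by
  rcases n.eq_zero_or_pos with rfl | hn
  · simpa using rpow_nonneg le_rfl s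
  have hn : (0 : ℝ) < n := Nat.cast_pos.2 hn
  calc (n : ℝ) * blockSize s n ^ 2 ≤ n * ((n : ℝ) ^ ((s - 1) / 2)) ^ 2 := by
        gcongr; exact blockSize_le_rpow s n
    _ = (n : ℝ) ^ s := by
        rw [← rpow_natCast, ← rpow_mul hn.le, show (s - 1) / 2 * ((2 : ℕ) : ℝ) = s - 1 by
          push_cast; ring, rpow_sub_one hn.ne', mul_div_cancel₀ _ hn.ne']

lemma natCast_div_blockSize_le (hn : 0 < n) (h : 2 ≤ (n : ℝ) ^ ((s - 1) / 2)) :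
    ((n / blockSize s n : ℕ) : ℝ) ≤ 2 * (n : ℝ) ^ ((3 - s) / 2) := by
  have hn : (0 : ℝ) < n := Nat.cast_pos.2 hn
  have hb : (n : ℝ) ^ ((s - 1) / 2) / 2 ≤ blockSize s n := by
    have := Nat.lt_floor_add_one ((n : ℝ) ^ ((s - 1) / 2))
    rw [blockSize]
    linarith
  calc ((n / blockSize s n : ℕ) : ℝ) ≤ n / blockSize s n := Nat.cast_div_le
    _ ≤ n / ((n : ℝ) ^ ((s - 1) / 2) / 2) := by gcongr
    _ = 2 * (n : ℝ) ^ ((3 - s) / 2) := by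
        rw [show (3 - s) / 2 = 1 - (s - 1) / 2 by ring, rpow_sub hn, rpow_one]
        field_simp

lemma eventually_blockSize (hs1 : 2 < s) (hs2 : s < 3) :
    ∀ᶠ n : ℕ in atTop, 7 ≤ n ∧ 3 ≤ blockSize s n ∧
      (((n / blockSize s n + 1) * 2 : ℕ) : ℝ) < 3 * √(log n) * (n : ℝ) ^ ((3 - s) / 2) := by
  have hpow : ∀ e : ℝ, 0 < e → ∀ c : ℝ, ∀ᶠ n : ℕ in atTop, c ≤ (n : ℝ) ^ e := fun e he c =>
    ((tendsto_rpow_atTop he).comp tendsto_natCast_atTop_atTop).eventually_ge_atTop c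
  filter_upwards [eventually_ge_atTop 7, hpow ((s - 1) / 2) (by linarith) 3,
    hpow ((3 - s) / 2) (by linarith) 2,
    (tendsto_log_atTop.comp tendsto_natCast_atTop_atTop).eventually_ge_atTop 4]
    with n hn7 hb hX (hlog : 4 ≤ log n)
  refine ⟨hn7, Nat.le_floor (by exact_mod_cast hb), ?_⟩
  have hdiv := natCast_div_blockSize_le (s := s) (n := n) (by omega) (by linarith)
  have hsqrt : 2 ≤ √(log n) := by
    rw [show (2 : ℝ) = √4 by rw [show (4 : ℝ) = 2 ^ 2 by norm_num, sqrt_sq zero_le_two]]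
    exact sqrt_le_sqrt hlog
  push_cast
  nlinarith

end BlockSize

/-- for every `2 < s < 3`, for all large enough `n` there is a Boolean
function of degree 3 with sparsity at most `n^s` such that every `0`-restriction on at
least `3·√(ln n)·n^((3-s)/2)` variables still has degree 3. -/
theorem stmt7 (s : ℝ) (hs1 : 2 < s) (hs2 : s < 3) :
    ∃ N : ℕ, ∀ n ≥ N, ∃ (f : (Fin n → ZMod 2) → ZMod 2) (M : Finset (Finset (Fin n))),
      IsANF f M ∧ (∀ S ∈ M, S.card ≤ 3) ∧ (∃ S ∈ M, S.card = 3) ∧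
      (M.card : ℝ) ≤ (n : ℝ) ^ s ∧
      ∀ K : Finset (Fin n),
        3 * Real.sqrt (Real.log n) * (n : ℝ) ^ (((3 : ℝ) - s) / 2) ≤ (K.card : ℝ) →
        ∀ M' : Finset (Finset (Fin n)), IsANF (zeroRestrict f K) M' →
          (∀ S ∈ M', S.card ≤ 3) ∧ ∃ S ∈ M', S.card = 3 := by
  obtain ⟨N, hN⟩ := Filter.eventually_atTop.1 (eventually_blockSize hs1 hs2)
  refine ⟨N, fun n hn => ?_⟩
  obtain ⟨hn7, hb3, hthreshold⟩ := hN n hn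
  set b := blockSize s n
  set M := fiberSubsets (fun i : Fin n => (i : ℕ) / b) 3
  have hdeg : ∀ S ∈ M, #S = 3 := fun S hS => (mem_fiberSubsets.1 hS).1
  have hcubic : ∀ K : Finset (Fin n), (n / b + 1) * 2 < #K → ∃ S ∈ M, S ⊆ K ∧ #S = 3 :=
    fun K hK => (exists_blockSubset_subset (k := 3) hK).imp fun S ⟨hS, hSK⟩ =>
      ⟨hS, hSK, hdeg S hS⟩
  refine ⟨anfEval M, M, fun _ => rfl, fun S hS => (hdeg S hS).le, ?_, ?_, ?_⟩
  · have : n / b ≤ n / 3 := Nat.div_le_div_left hb3 (by norm_num)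
    obtain ⟨S, hS, -, hS3⟩ := hcubic univ (by rw [card_univ, Fintype.card_fin]; omega)
    exact ⟨S, hS, hS3⟩
  · calc (#M : ℝ) ≤ n * b ^ 2 := by exact_mod_cast card_blockSubsets_le (by omega) 3 le_add_self
      _ ≤ (n : ℝ) ^ s := natCast_mul_blockSize_sq_le s n
  · intro K hK M' hM'
    exact degree_zeroRestrict_anfEval (fun S hS => (hdeg S hS).le)
      (hcubic K (by exact_mod_cast hthreshold.trans_le hK)) hM'
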